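/- arXiv:2603.12999 — 6 statements merged into one kernel-verified Lean document; each statement's English description precedes it below -/
import Mathlib

section
/- Let W, n, k be positive integers with n ≥ 2, and let X be a multiset of n positive integers all lying in the interval [W(1 - 1/n²), W]. If X is partitioned into k sub-multisets X₁, …, X_k such that Σ(X_i) = Σ(X)/k for every i ∈ [k], then |X_i| = n/k for every i ∈ [k]; in particular, k divides n. -/
/-!
A part with `m` elements has sum between `m W (1 - 1/n²)` and `m W`, and `X` has sum between
`n W (1 - 1/n²)` and `n W`. Since `k` times the part's sum is the sum of `X`, this gives
`mk (n² - 1) ≤ n³` and `n (n² - 1) ≤ mk n²`, which for `n ≥ 2` leave only `mk = n`.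
For `n = 1` the interval condition is empty; instead positivity makes every part nonempty,
so there is a single part, equal to `X`.
-/

open Multiset

theorem Multiset.card_mul_le_sum_mul {s : Multiset ℕ} {a b : ℕ} (h : ∀ x ∈ s, a ≤ x * b) :
    card s * a ≤ s.sum * b := by
  simpa [sum_map_mul_right] using
    card_nsmul_le_sum (s := s.map (· * b)) (a := a) (by simpa using h)

theorem Multiset.sum_le_card_mul {s : Multiset ℕ} {W : ℕ} (h : ∀ x ∈ s, x ≤ W) :
    s.sum ≤ card s * W := by
  simpa using sum_le_card_nsmul s W h

theorem Nat.eq_of_mul_sq_sub_one_le {n N : ℕ} (hn : 2 ≤ n)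
    (hup : N * (n ^ 2 - 1) ≤ n * n ^ 2) (hlow : n * (n ^ 2 - 1) ≤ N * n ^ 2) : N = n := by
  obtain ⟨c, rfl⟩ : ∃ c, n = c + 2 := ⟨n - 2, by omega⟩
  have hsq : (c + 2) ^ 2 - 1 = c ^ 2 + 4 * c + 3 := by
    rw [Nat.sub_eq_iff_eq_add (by nlinarith)]; ring
  rw [hsq] at hup hlow
  rcases lt_trichotomy N (c + 2) with h | h | h
  · nlinarith
  · exact h
  · nlinarith

theorem Multiset.card_mul_eq_of_le_of_sum_mul_eq {W n k : ℕ} {X Y : Multiset ℕ}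
    (hW : 0 < W) (hn : 2 ≤ n) (hcard : card X = n)
    (hmem : ∀ x ∈ X, W * (n ^ 2 - 1) ≤ x * n ^ 2 ∧ x ≤ W)
    (hY : Y ≤ X) (hsum : Y.sum * k = X.sum) : card Y * k = n := by
  have hXlow := card_mul_le_sum_mul fun x hx => (hmem x hx).1
  have hXup := sum_le_card_mul fun x hx => (hmem x hx).2
  have hYlow := card_mul_le_sum_mul fun y hy => (hmem y (mem_of_le hY hy)).1
  have hYup := sum_le_card_mul fun y hy => (hmem y (mem_of_le hY hy)).2
  rw [hcard] at hXlow hXup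
  apply Nat.eq_of_mul_sq_sub_one_le hn
  · refine Nat.le_of_mul_le_mul_left ?_ hW
    calc W * (card Y * k * (n ^ 2 - 1)) = card Y * (W * (n ^ 2 - 1)) * k := by ring
      _ ≤ Y.sum * n ^ 2 * k := by gcongr
      _ = X.sum * n ^ 2 := by rw [← hsum]; ring
      _ ≤ n * W * n ^ 2 := by gcongr
      _ = W * (n * n ^ 2) := by ring
  · refine Nat.le_of_mul_le_mul_left ?_ hW
    calc W * (n * (n ^ 2 - 1)) = n * (W * (n ^ 2 - 1)) := by ring
      _ ≤ X.sum * n ^ 2 := hXlow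
      _ = Y.sum * k * n ^ 2 := by rw [hsum]
      _ ≤ card Y * W * k * n ^ 2 := by gcongr
      _ = W * (card Y * k * n ^ 2) := by ring

theorem Multiset.card_mul_eq_one_of_card_eq_one {k : ℕ} {X : Multiset ℕ} (hX : card X = 1)
    (hpos : ∀ x ∈ X, 0 < x) {P : Fin k → Multiset ℕ} (hpart : ∑ i, P i = X)
    (hsum : ∀ i, (P i).sum * k = X.sum) (i : Fin k) : card (P i) * k = 1 := by
  obtain ⟨x, rfl⟩ := card_eq_one.mp hX
  have hnonempty : ∀ j, 0 < card (P j) := by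
    intro j
    refine card_pos.mpr fun h => ?_
    have := hsum j
    simp only [h, sum_zero, zero_mul, sum_singleton] at this
    exact (hpos x (mem_singleton_self x)).ne this
  have hcards : ∑ j, card (P j) = 1 := by rw [← card_sum, hpart, hX]
  have hk : k ≤ 1 := by
    simpa [hcards] using
      Finset.card_nsmul_le_sum Finset.univ (fun j => card (P j)) 1 fun j _ => hnonempty j
  have hPi : card (P i) ≤ 1 :=
    hcards ▸ Finset.single_le_sum (f := fun j => card (P j)) (by simp) (Finset.mem_univ i)
  have hPi_pos := hnonempty i
  have hk_pos := i.pos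
  rw [show card (P i) = 1 by omega, show k = 1 by omega]

/-- Observation: if a multiset `X` of `n` positive integers all lying in
`[W(1 - 1/n²), W]` is partitioned into `k` sub-multisets of equal sum
`Σ(X)/k`, then each part has exactly `n/k` elements; in particular `k ∣ n`.
The interval condition `W(1 - 1/n²) ≤ x` is encoded as `W*(n² - 1) ≤ x*n²`,
and `Σ(X_i) = Σ(X)/k` as `Σ(X_i)·k = Σ(X)` (avoiding division). -/
theorem stmt_0 (W n k : ℕ) (hW : 0 < W) (hn : 0 < n) (hk : 0 < k)
    (X : Multiset ℕ) (hcard : Multiset.card X = n)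
    (hmem : ∀ x ∈ X, 0 < x ∧ W * (n ^ 2 - 1) ≤ x * n ^ 2 ∧ x ≤ W)
    (P : Fin k → Multiset ℕ)
    (hpart : ∑ i, P i = X)
    (hsum : ∀ i, (P i).sum * k = X.sum) :
    (∀ i, Multiset.card (P i) * k = n) ∧ k ∣ n := by
  have hcard_part : ∀ i, card (P i) * k = n := by
    rcases lt_or_ge n 2 with hn2 | hn2
    · obtain rfl : n = 1 := by omega
      exact card_mul_eq_one_of_card_eq_one hcard (fun x hx => (hmem x hx).1) hpart hsum
    · intro i
      have hle : P i ≤ X := hpart ▸ Finset.single_le_sum (f := P) (by simp) (Finset.mem_univ i)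
      exact card_mul_eq_of_le_of_sum_mul_eq hW hn2 hcard (fun x hx => (hmem x hx).2) hle (hsum i)
  exact ⟨hcard_part, Dvd.intro_left _ (hcard_part ⟨0, hk⟩)⟩
end

section
/- Let q ≥ 1, k ≥ 2, s ≥ 1 be integers and let f : [q] × [k-1] → ℤ be a function satisfying: (1) for all c ∈ [q] and ℓ ∈ [k-1], Σ_{b=1}^{c} f(b,ℓ) ≥ 0; (2) Σ_{ℓ=1}^{k-1} Σ_{b=1}^{q} f(b,ℓ) = 0; and (3) for all ℓ ∈ [k-1], Σ_{c=1}^{q} Σ_{b=c}^{q} f(b,ℓ) = 0. Then f(b,ℓ) = 0 for all b ∈ [q] and ℓ ∈ [k-1]. -/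
/-!
Fix `ℓ` and let `S c = ∑_{b ≤ c} f(b, ℓ)` be the prefix sums, all nonnegative by (1). The totals
`S q` are nonnegative and add up to zero by (2), so each vanishes. The `c`-th suffix sum equals
`S q - S (c - 1) = -S (c - 1)`, so (3) says that `S 0 + ⋯ + S (q - 1) = 0`; being nonnegative,
all prefix sums vanish, and hence so does every `f(b, ℓ) = S b - S (b - 1)`.
-/

open Finset

namespace PrefixSum

variable {M : Type*}

def prefixSum [AddCommMonoid M] (g : ℕ → M) (c : ℕ) : M := ∑ b ∈ Icc 1 c, g b

theorem prefixSum_succ [AddCommMonoid M] (g : ℕ → M) (c : ℕ) :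
    prefixSum g (c + 1) = prefixSum g c + g (c + 1) :=
  sum_Icc_succ_top (by omega) g

section AddCommGroup

variable [AddCommGroup M] (g : ℕ → M)

theorem sum_Icc_succ_eq_prefixSum_sub {c q : ℕ} (hcq : c ≤ q) :
    ∑ b ∈ Icc (c + 1) q, g b = prefixSum g q - prefixSum g c := by
  have hIcc_one (n : ℕ) : Icc 1 n = Ioc 0 n := Icc_add_one_left_eq_Ioc 0 n
  rw [eq_sub_iff_add_eq', prefixSum, prefixSum, Icc_add_one_left_eq_Ioc, hIcc_one, hIcc_one,
    sum_Ioc_consecutive g (Nat.zero_le c) hcq]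

theorem sum_suffixSums_eq (q : ℕ) :
    ∑ c ∈ Icc 1 q, ∑ b ∈ Icc c q, g b = q • prefixSum g q - ∑ c ∈ range q, prefixSum g c := by
  have hreindex : ∑ c ∈ Icc 1 q, ∑ b ∈ Icc c q, g b = ∑ c ∈ range q, ∑ b ∈ Icc (c + 1) q, g b := by
    rw [← Ico_add_one_right_eq_Icc, sum_Ico_eq_sum_range, Nat.add_sub_cancel]
    simp only [add_comm 1]
  rw [hreindex, sum_congr rfl fun c hc => sum_Icc_succ_eq_prefixSum_sub g (mem_range.mp hc).le,
    sum_sub_distrib, sum_const, card_range]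

end AddCommGroup

variable [AddCommGroup M] [PartialOrder M] [IsOrderedAddMonoid M] {g : ℕ → M} {q : ℕ}

theorem prefixSum_eq_zero_of_sum_suffixSums_eq_zero
    (hnonneg : ∀ c ∈ Icc 1 q, 0 ≤ prefixSum g c) (htotal : prefixSum g q = 0)
    (hsuffix : ∑ c ∈ Icc 1 q, ∑ b ∈ Icc c q, g b = 0) {c : ℕ} (hcq : c ≤ q) :
    prefixSum g c = 0 := by
  rcases hcq.eq_or_lt with rfl | hcq
  · exact htotal
  have hsum : ∑ c ∈ range q, prefixSum g c = 0 := by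
    rw [sum_suffixSums_eq, htotal, smul_zero, zero_sub, neg_eq_zero] at hsuffix
    exact hsuffix
  refine (sum_eq_zero_iff_of_nonneg fun c hc => ?_).mp hsum c (mem_range.mpr hcq)
  rcases c.eq_zero_or_pos with rfl | hc0
  · simp [prefixSum]
  · exact hnonneg c (mem_Icc.mpr ⟨hc0, (mem_range.mp hc).le⟩)

theorem eq_zero_of_sum_suffixSums_eq_zero
    (hnonneg : ∀ c ∈ Icc 1 q, 0 ≤ prefixSum g c) (htotal : prefixSum g q = 0)
    (hsuffix : ∑ c ∈ Icc 1 q, ∑ b ∈ Icc c q, g b = 0) {b : ℕ} (hb : b ∈ Icc 1 q) :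
    g b = 0 := by
  obtain ⟨hb1, hbq⟩ := mem_Icc.mp hb
  obtain ⟨c, rfl⟩ : ∃ c, b = c + 1 := Nat.exists_eq_add_of_le' hb1
  have hzero {d : ℕ} (hd : d ≤ q) : prefixSum g d = 0 :=
    prefixSum_eq_zero_of_sum_suffixSums_eq_zero hnonneg htotal hsuffix hd
  have hstep := prefixSum_succ g c
  rwa [hzero hbq, hzero (by omega), zero_add, eq_comm] at hstep

end PrefixSum

open PrefixSum in
theorem stmt_1_general (q k : ℕ)
    (f : ℕ → ℕ → ℤ)
    (h1 : ∀ c ∈ Finset.Icc 1 q, ∀ ℓ ∈ Finset.Icc 1 (k - 1),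
      0 ≤ ∑ b ∈ Finset.Icc 1 c, f b ℓ)
    (h2 : ∑ ℓ ∈ Finset.Icc 1 (k - 1), ∑ b ∈ Finset.Icc 1 q, f b ℓ = 0)
    (h3 : ∀ ℓ ∈ Finset.Icc 1 (k - 1),
      ∑ c ∈ Finset.Icc 1 q, ∑ b ∈ Finset.Icc c q, f b ℓ = 0) :
    ∀ b ∈ Finset.Icc 1 q, ∀ ℓ ∈ Finset.Icc 1 (k - 1), f b ℓ = 0 := by
  intro b hb ℓ hℓ
  have hq : q ∈ Icc 1 q := right_mem_Icc.mpr ((mem_Icc.mp hb).1.trans (mem_Icc.mp hb).2)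
  have htotal : prefixSum (f · ℓ) q = 0 :=
    (sum_eq_zero_iff_of_nonneg fun ℓ' hℓ' => h1 q hq ℓ' hℓ').mp h2 ℓ hℓ
  exact eq_zero_of_sum_suffixSums_eq_zero (fun c hc => h1 c hc ℓ hℓ) htotal (h3 ℓ hℓ) hb

/-- Key counting lemma: if `f : [q] × [k-1] → ℤ` has all prefix sums (in the
first coordinate) nonnegative, total sum zero, and for each `ℓ` the sum of all
suffix sums vanishes, then `f` is identically zero. -/
theorem stmt_1 (q k s : ℕ) (hq : 1 ≤ q) (hk : 2 ≤ k) (hs : 1 ≤ s)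
    (f : ℕ → ℕ → ℤ)
    (h1 : ∀ c ∈ Finset.Icc 1 q, ∀ ℓ ∈ Finset.Icc 1 (k - 1),
      0 ≤ ∑ b ∈ Finset.Icc 1 c, f b ℓ)
    (h2 : ∑ ℓ ∈ Finset.Icc 1 (k - 1), ∑ b ∈ Finset.Icc 1 q, f b ℓ = 0)
    (h3 : ∀ ℓ ∈ Finset.Icc 1 (k - 1),
      ∑ c ∈ Finset.Icc 1 q, ∑ b ∈ Finset.Icc c q, f b ℓ = 0) :
    ∀ b ∈ Finset.Icc 1 q, ∀ ℓ ∈ Finset.Icc 1 (k - 1), f b ℓ = 0 :=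
  stmt_1_general q k f h1 h2 h3
end

section
/- Let k ≥ 2, u ≥ 1, d ≥ 1, h = 2ku, and consider vectors y₁, …, y_a, y ∈ {0,…,u}^d. Define the encoding e(z) = h^d + Σ_{i=1}^{d} z[i]·h^{i-1}. If 0 ≤ a, b ≤ k, then e(y₁) + ⋯ + e(y_a) = b·e(y) holds if and only if a = b and y₁ + ⋯ + y_a = b·y (as vectors in ℤ^d). -/
open Finset

private lemma digits_unique (h : ℕ) (hh : 0 < h) :
    ∀ (d A B : ℕ) (f g : ℕ → ℕ), (∀ i, i < d → f i < h) → (∀ i, i < d → g i < h) →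
    (∑ i ∈ range d, f i * h ^ i) + A * h ^ d
      = (∑ i ∈ range d, g i * h ^ i) + B * h ^ d →
    A = B ∧ ∀ i, i < d → f i = g i := by
  intro d
  induction d with
  | zero =>
    intro A B f g _ _ heq
    simp only [range_zero, sum_empty, pow_zero, mul_one, zero_add] at heq
    exact ⟨heq, fun i hi => absurd hi (by omega)⟩
  | succ d ih =>
    intro A B f g hf hg heq
    have hrw : ∀ (f : ℕ → ℕ) (A : ℕ),
        (∑ i ∈ range (d+1), f i * h ^ i) + A * h ^ (d+1)
          = f 0 + ((∑ i ∈ range d, f (i+1) * h ^ i) + A * h ^ d) * h := by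
      intro f A
      rw [Finset.sum_range_succ']
      simp only [pow_succ, ← mul_assoc]
      rw [← Finset.sum_mul]
      ring
    rw [hrw f A, hrw g B] at heq
    have hf0 : f 0 < h := hf 0 (by omega)
    have hg0 : g 0 < h := hg 0 (by omega)
    set X := (∑ i ∈ range d, f (i+1) * h ^ i) + A * h ^ d with hX
    set Y := (∑ i ∈ range d, g (i+1) * h ^ i) + B * h ^ d with hY
    have h0 : f 0 = g 0 := by
      have := congrArg (· % h) heq
      simpa [Nat.add_mul_mod_self_right, Nat.mod_eq_of_lt hf0, Nat.mod_eq_of_lt hg0]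
        using this
    have hXY : X = Y := by
      have : X * h = Y * h := by omega
      exact Nat.eq_of_mul_eq_mul_right hh this
    obtain ⟨hAB, hfg⟩ := ih A B (fun i => f (i+1)) (fun i => g (i+1))
      (fun i hi => hf (i+1) (by omega)) (fun i hi => hg (i+1) (by omega)) hXY
    refine ⟨hAB, fun i hi => ?_⟩
    rcases i with _ | i
    · exact h0
    · exact hfg i (by omega)

/-- No-overflow property of the base-`2ku` encoding
`e(z) = h^d + ∑ i, z[i]·h^(i-1)` with `h = 2ku`: for `a, b ≤ k` and vectors
`y₁,…,y_a, z ∈ {0,…,u}^d`, `e(y₁) + ⋯ + e(y_a) = b·e(z)` iff `a = b` and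
`y₁ + ⋯ + y_a = b·z` coordinate-wise. -/
theorem stmt_4 (k u d : ℕ) (hk : 2 ≤ k) (hu : 1 ≤ u) (hd : 1 ≤ d)
    (a b : ℕ) (ha : a ≤ k) (hb : b ≤ k)
    (y : Fin a → Fin d → ℕ) (z : Fin d → ℕ)
    (hy : ∀ j i, y j i ≤ u) (hz : ∀ i, z i ≤ u) :
    (∑ j, ((2 * k * u) ^ d + ∑ i, y j i * (2 * k * u) ^ (i : ℕ)))
      = b * ((2 * k * u) ^ d + ∑ i, z i * (2 * k * u) ^ (i : ℕ))
    ↔ (a = b ∧ ∀ i, (∑ j, y j i) = b * z i) := by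
  set h := 2 * k * u with hh
  have hhpos : 0 < h := by positivity
  set Y : ℕ → ℕ := fun i => if hi : i < d then ∑ j, y j ⟨i, hi⟩ else 0 with hYdef
  set Z : ℕ → ℕ := fun i => if hi : i < d then b * z ⟨i, hi⟩ else 0 with hZdef
  have hYfin : ∀ i : Fin d, Y i.val = ∑ j, y j i := by
    intro i; simp [hYdef, i.isLt]
  have hZfin : ∀ i : Fin d, Z i.val = b * z i := by
    intro i; simp [hZdef, i.isLt]
  have hL : (∑ j, (h ^ d + ∑ i, y j i * h ^ (i : ℕ)))
      = (∑ i ∈ range d, Y i * h ^ i) + a * h ^ d := by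
    rw [Finset.sum_add_distrib, Finset.sum_const, card_univ, Fintype.card_fin,
      smul_eq_mul, Finset.sum_comm,
      ← Fin.sum_univ_eq_sum_range (fun i => Y i * h ^ i) d]
    have : ∀ i : Fin d, Y i.val * h ^ i.val = ∑ j, y j i * h ^ (i : ℕ) := by
      intro i; rw [hYfin i, Finset.sum_mul]
    rw [Finset.sum_congr rfl (fun i _ => this i)]
    ring
  have hR : b * (h ^ d + ∑ i, z i * h ^ (i : ℕ))
      = (∑ i ∈ range d, Z i * h ^ i) + b * h ^ d := by
    rw [← Fin.sum_univ_eq_sum_range (fun i => Z i * h ^ i) d]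
    have : ∀ i : Fin d, Z i.val * h ^ i.val = b * (z i * h ^ (i : ℕ)) := by
      intro i; rw [hZfin i]; ring
    rw [Finset.sum_congr rfl (fun i _ => this i), ← Finset.mul_sum]
    ring
  rw [hL, hR]
  constructor
  · intro heq
    obtain ⟨hab, hco⟩ := digits_unique h hhpos d a b Y Z
      (fun i hi => by
        rw [hYdef]; simp only [hi, dif_pos]
        calc ∑ j, y j (⟨i, hi⟩ : Fin d) ≤ ∑ _j : Fin a, u :=
              Finset.sum_le_sum (fun j _ => hy j _)
          _ = a * u := by simp [mul_comm]
          _ < h := by rw [hh]; nlinarith)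
      (fun i hi => by
        rw [hZdef]; simp only [hi, dif_pos]
        calc b * z (⟨i, hi⟩ : Fin d) ≤ k * u := Nat.mul_le_mul hb (hz _)
          _ < h := by rw [hh]; nlinarith)
      heq
    refine ⟨hab, fun i => ?_⟩
    have := hco i.val i.isLt
    rw [hYfin i, hZfin i] at this
    exact this
  · rintro ⟨rfl, hco⟩
    congr 1
    apply Finset.sum_congr rfl
    intro i hi
    have hi' : i < d := Finset.mem_range.mp hi
    congr 1
    rw [hYdef, hZdef]
    simp only [hi', dif_pos]
    rw [hco]
end

section
/- For all integers τ ≥ 1 and k ≥ 1, there exists a multiset P of positive integers with |P| = O(k² log τ) and Σ(P) = τ such that for every tuple (t₁, …, t_k) of nonnegative integers with t₁ + ⋯ + t_k = τ, there is a partition of P into sub-multisets P₁, …, P_k with Σ(P_i) = t_i for all i ∈ [k]. -/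
/-!
Call a list greedily splittable for `k` if each element `p` is positive and `k * (p - 1)` is at
most the sum of the elements after it. Such a list realises every `k`-tuple of demands with the
right total: put its first element `p` into a part whose demand is at least `p`, which exists
because otherwise the demands would sum to at most `k * (p - 1)`, less than the total.

With `h = ⌊log₂ (τ / k)⌋`, the list made of `m ≤ 2k` copies of `2 ^ h`, the binary digits of a
remainder `b < 2 ^ h`, and then `k` copies of each of `2 ^ (h - 1), …, 2 ^ 0` is greedily
splittable, sums to `τ`, and has at most `2k + h + kh` elements.
-/

def GreedySplittable (k : ℕ) : List ℕ → Prop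
  | [] => True
  | p :: l => 0 < p ∧ k * (p - 1) ≤ l.sum ∧ GreedySplittable k l

namespace GreedySplittable

variable {k : ℕ}

theorem pos_of_mem : ∀ {l : List ℕ}, GreedySplittable k l → ∀ p ∈ l, 0 < p
  | [], _, p, hp => by simp at hp
  | q :: l, ⟨hq, _, hl⟩, p, hp => by
    rcases List.mem_cons.mp hp with rfl | hp
    exacts [hq, pos_of_mem hl p hp]

theorem append {l₁ l₂ : List ℕ} (h₁ : ∀ p ∈ l₁, 0 < p ∧ k * (p - 1) ≤ l₂.sum)
    (h₂ : GreedySplittable k l₂) : GreedySplittable k (l₁ ++ l₂) := by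
  induction l₁ with
  | nil => exact h₂
  | cons p l ih =>
    obtain ⟨hp, hpk⟩ := h₁ p List.mem_cons_self
    refine ⟨hp, ?_, ih fun q hq => h₁ q (List.mem_cons_of_mem p hq)⟩
    rw [List.append_eq, List.sum_append]
    omega

theorem exists_partition {ι : Type*} [Fintype ι] [DecidableEq ι] {l : List ℕ}
    (hl : GreedySplittable (Fintype.card ι) l) (d : ι → ℕ) (hd : ∑ i, d i = l.sum) :
    ∃ Q : ι → Multiset ℕ, ∑ i, Q i = l ∧ ∀ i, (Q i).sum = d i := by
  induction l generalizing d with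
  | nil =>
    refine ⟨0, by simp, fun i => ?_⟩
    simpa using (Finset.sum_eq_zero_iff.mp hd i (Finset.mem_univ i)).symm
  | cons p l ih =>
    obtain ⟨hp, hpl, hl⟩ := hl
    obtain ⟨i, -, hi⟩ : ∃ i ∈ Finset.univ, p - 1 < d i := by
      refine Finset.exists_lt_of_sum_lt ?_
      simp only [Finset.sum_const, Finset.card_univ, smul_eq_mul, hd, List.sum_cons]
      omega
    set d' : ι → ℕ := d - Pi.single i p
    have hd' : ∀ j, d j = d' j + Pi.single (M := fun _ => ℕ) i p j := by
      intro j
      by_cases hj : j = i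
      · subst hj; simp [d']; omega
      · simp [d', hj]
    obtain ⟨Q, hQ, hQd⟩ := ih hl d' (by
      rw [Finset.sum_congr rfl fun j _ => hd' j, Finset.sum_add_distrib,
        Finset.sum_pi_single', if_pos (Finset.mem_univ i), List.sum_cons] at hd
      omega)
    refine ⟨fun j => Q j + Pi.single (M := fun _ => Multiset ℕ) i {p} j, ?_, fun j => ?_⟩
    · rw [Finset.sum_add_distrib, Finset.sum_pi_single', if_pos (Finset.mem_univ i), hQ,
        ← Multiset.cons_coe, add_comm, Multiset.singleton_add]
    · rw [hd', Multiset.sum_add, hQd]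
      by_cases hj : j = i
      · subst hj; simp
      · simp [hj]

end GreedySplittable

def powerLayers (k : ℕ) : ℕ → List ℕ
  | 0 => []
  | h + 1 => List.replicate k (2 ^ h) ++ powerLayers k h

theorem sum_powerLayers (k h : ℕ) : (powerLayers k h).sum = k * (2 ^ h - 1) := by
  induction h with
  | zero => simp [powerLayers]
  | succ h ih =>
    rw [powerLayers, List.sum_append, List.sum_replicate, ih, smul_eq_mul, pow_succ, ← Nat.mul_add]
    have := Nat.one_le_two_pow (n := h)
    congr 1
    omega

theorem length_powerLayers (k h : ℕ) : (powerLayers k h).length = k * h := by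
  induction h with
  | zero => rfl
  | succ h ih => rw [powerLayers, List.length_append, List.length_replicate, ih]; ring

theorem greedySplittable_powerLayers (k h : ℕ) : GreedySplittable k (powerLayers k h) := by
  induction h with
  | zero => trivial
  | succ h ih =>
    refine GreedySplittable.append (fun p hp => ?_) ih
    obtain rfl := List.eq_of_mem_replicate hp
    exact ⟨Nat.two_pow_pos h, (sum_powerLayers k h).ge⟩

theorem greedySplittable_append_powerLayers {k h : ℕ} {l : List ℕ}
    (hl : ∀ p ∈ l, 0 < p ∧ p ≤ 2 ^ h) : GreedySplittable k (l ++ powerLayers k h) :=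
  GreedySplittable.append (fun p hp => ⟨(hl p hp).1, by
    rw [sum_powerLayers]
    exact Nat.mul_le_mul_left k (Nat.sub_le_sub_right (hl p hp).2 1)⟩)
    (greedySplittable_powerLayers k h)

theorem length_bitIndices_le {b h : ℕ} (hb : b < 2 ^ h) : b.bitIndices.length ≤ h := by
  rw [← List.toFinset_card_of_nodup Nat.bitIndices_nodup, ← Finset.card_range h]
  refine Finset.card_le_card fun i hi => ?_
  rw [List.mem_toFinset] at hi
  rw [Finset.mem_range, ← Nat.pow_lt_pow_iff_right (by norm_num : 1 < 2)]
  exact (Nat.two_pow_le_of_mem_bitIndices hi).trans_lt hb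

theorem exists_powerLayers_decomposition (τ : ℕ) {k : ℕ} (hk : 0 < k) :
    ∃ h m b, b < 2 ^ h ∧ m * 2 ^ h + b + k * (2 ^ h - 1) = τ ∧ m ≤ 2 * k ∧ h ≤ Nat.log 2 τ := by
  set h := Nat.log 2 (τ / k)
  have hlow : k * (2 ^ h - 1) ≤ τ := by
    rcases Nat.eq_zero_or_pos (τ / k) with hτ | hτ
    · simp [h, hτ]
    · calc k * (2 ^ h - 1) ≤ k * (τ / k) :=
            Nat.mul_le_mul_left k ((Nat.sub_le _ 1).trans (Nat.pow_log_le_self 2 hτ.ne'))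
        _ ≤ τ := Nat.mul_div_le τ k
  have hup : τ < 2 * k * 2 ^ h := by
    have := Nat.lt_pow_succ_log_self (by norm_num : 1 < 2) (τ / k)
    rw [Nat.div_lt_iff_lt_mul hk, pow_succ] at this
    linarith
  set a := τ - k * (2 ^ h - 1)
  refine ⟨h, a / 2 ^ h, a % 2 ^ h, Nat.mod_lt a (Nat.two_pow_pos h), ?_, ?_,
    Nat.log_mono_right (Nat.div_le_self τ k)⟩
  · rw [Nat.mul_comm, Nat.div_add_mod]
    omega
  · exact Nat.div_le_of_le_mul ((Nat.sub_le τ _).trans (by rw [mul_comm]; exact hup.le))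

/-- For all `τ ≥ 1` and `k ≥ 1` there is a multiset `P` of positive integers
with `|P| = O(k² log τ)` and `Σ(P) = τ` such that every tuple
`(t₁,…,t_k)` of nonnegative integers with `t₁ + ⋯ + t_k = τ` is realized by a
partition of `P` into sub-multisets `P₁,…,P_k` with `Σ(P_i) = t_i`. -/
theorem stmt_5 : ∃ C : ℕ, 0 < C ∧ ∀ τ k : ℕ, 1 ≤ τ → 1 ≤ k →
    ∃ P : Multiset ℕ,
      (∀ x ∈ P, 0 < x) ∧
      Multiset.card P ≤ C * k ^ 2 * (Nat.log 2 τ + 1) ∧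
      P.sum = τ ∧
      ∀ t : Fin k → ℕ, (∑ i, t i) = τ →
        ∃ Q : Fin k → Multiset ℕ, (∑ i, Q i) = P ∧ ∀ i, (Q i).sum = t i := by
  refine ⟨2, by norm_num, fun τ k _ hk => ?_⟩
  obtain ⟨h, m, b, hb, hτ, hm, hh⟩ := exists_powerLayers_decomposition τ hk
  set l := List.replicate m (2 ^ h) ++ b.bitIndices.map (2 ^ ·) ++ powerLayers k h
  have hl : GreedySplittable k l := by
    refine greedySplittable_append_powerLayers fun p hp => ?_
    rcases List.mem_append.mp hp with hp | hp
    · obtain rfl := List.eq_of_mem_replicate hp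
      exact ⟨Nat.two_pow_pos h, le_rfl⟩
    · obtain ⟨i, hi, rfl⟩ := List.mem_map.mp hp
      exact ⟨Nat.two_pow_pos i, (Nat.two_pow_le_of_mem_bitIndices hi).trans hb.le⟩
  have hsum : l.sum = τ := by
    simp only [l, List.sum_append, List.sum_replicate, Nat.sum_map_two_pow_bitIndices,
      sum_powerLayers, smul_eq_mul, hτ]
  refine ⟨l, hl.pos_of_mem, ?_, hsum, fun t ht => ?_⟩
  · have hbits := length_bitIndices_le hb
    simp only [Multiset.coe_card, l, List.length_append, List.length_replicate, List.length_map,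
      length_powerLayers]
    nlinarith [Nat.mul_le_mul_left k hh,
      Nat.mul_le_mul_right (Nat.log 2 τ) (Nat.le_self_pow two_ne_zero k)]
  · rw [← Fintype.card_fin k] at hl
    exact hl.exists_partition t (ht.trans hsum.symm)
end

section
/- Let n, k, s, q, W be positive integers with n = ksq, W ≥ n^{10}, n ≥ 2, and let the jobs be grouped into G₁, …, G_q with |G_i| = sk and every processing time in [W(1 − 1/n^{10}), W]. Suppose for each group G_i the jobs of G_i assigned to machine ℓ form a set S_{i,ℓ}, and suppose for every i ∈ [q] and ℓ ∈ [k]: Σ(S_{1,ℓ}) + ⋯ + Σ(S_{i,ℓ}) ≤ i·s·W. Then |S_{1,ℓ}| + ⋯ + |S_{i,ℓ}| ≤ i·s for all i ∈ [q] and ℓ ∈ [k]; moreover if additionally Σ_ℓ |S_{i,ℓ}| = sk for each i, then |S_{i,ℓ}| = s for all i, ℓ. -/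
/-- Jobs grouped into `q` groups of size `sk`, with all processing times in
`[W(1 − 1/n^10), W]` (encoded as `W·(n^10 − 1) ≤ x·n^10 ∧ x ≤ W`), assigned
to `k` machines as `S i ℓ`. If every machine's load from the first `i` groups
is at most `i·s·W`, then every machine receives at most `i·s` jobs from the
first `i` groups; moreover, if each group is fully distributed
(`∑_ℓ |S i ℓ| = sk`), then `|S i ℓ| = s` for all `i, ℓ`. -/
theorem stmt_13 (n k s q W : ℕ) (hn : n = k * s * q) (hn2 : 2 ≤ n)
    (hW : n ^ 10 ≤ W) (hk : 0 < k) (hs : 0 < s) (hq : 0 < q)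
    (S : Fin q → Fin k → Multiset ℕ)
    (hmem : ∀ i ℓ, ∀ x ∈ S i ℓ, W * (n ^ 10 - 1) ≤ x * n ^ 10 ∧ x ≤ W)
    (hload : ∀ (i : Fin q) (ℓ : Fin k),
      ∑ b ∈ Finset.univ.filter (· ≤ i), (S b ℓ).sum ≤ ((i : ℕ) + 1) * s * W) :
    (∀ (i : Fin q) (ℓ : Fin k),
      ∑ b ∈ Finset.univ.filter (· ≤ i), Multiset.card (S b ℓ) ≤ ((i : ℕ) + 1) * s) ∧
    ((∀ i : Fin q, ∑ ℓ, Multiset.card (S i ℓ) = s * k) →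
      ∀ i ℓ, Multiset.card (S i ℓ) = s) := by
  have hP1 : 1 ≤ n ^ 10 := Nat.one_le_pow _ _ (by omega)
  have hP2 : n + 1 < n ^ 10 := by
    have h2 : n ^ 2 ≤ n ^ 10 := Nat.pow_le_pow_right (by omega) (by norm_num)
    nlinarith
  have hWpos : 0 < W := lt_of_lt_of_le (by omega) hW
  have part1 : ∀ (i : Fin q) (ℓ : Fin k),
      ∑ b ∈ Finset.univ.filter (· ≤ i), Multiset.card (S b ℓ) ≤ ((i : ℕ) + 1) * s := by
    intro i ℓ
    set M := ((i : ℕ) + 1) * s with hM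
    have hMn : M ≤ n := by
      have : (i : ℕ) + 1 ≤ q := i.2
      calc M ≤ q * s := by exact Nat.mul_le_mul_right s this
        _ ≤ k * s * q := by
            calc q * s = s * q := by ring
              _ ≤ k * (s * q) := Nat.le_mul_of_pos_left _ hk
              _ = k * s * q := by ring
        _ = n := hn.symm
    -- per-group bound
    have key : ∀ b : Fin q, Multiset.card (S b ℓ) * (W * (n ^ 10 - 1)) ≤ (S b ℓ).sum * n ^ 10 := by
      intro b
      have h1 : Multiset.card ((S b ℓ).map (· * n ^ 10)) • (W * (n ^ 10 - 1)) ≤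
          ((S b ℓ).map (· * n ^ 10)).sum :=
        Multiset.card_nsmul_le_sum (by
          intro y hy
          rcases Multiset.mem_map.mp hy with ⟨x, hx, rfl⟩
          exact (hmem b ℓ x hx).1)
      rw [Multiset.card_map] at h1
      have h2 : ((S b ℓ).map (· * n ^ 10)).sum = (S b ℓ).sum * n ^ 10 := by
        rw [Multiset.sum_map_mul_right, Multiset.map_id']
      rw [h2] at h1
      simpa [smul_eq_mul] using h1
    have hsum : (∑ b ∈ Finset.univ.filter (· ≤ i), Multiset.card (S b ℓ)) * (W * (n ^ 10 - 1)) ≤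
        M * W * n ^ 10 := by
      rw [Finset.sum_mul]
      calc ∑ b ∈ Finset.univ.filter (· ≤ i), Multiset.card (S b ℓ) * (W * (n ^ 10 - 1))
          ≤ ∑ b ∈ Finset.univ.filter (· ≤ i), (S b ℓ).sum * n ^ 10 :=
            Finset.sum_le_sum fun b _ => key b
        _ = (∑ b ∈ Finset.univ.filter (· ≤ i), (S b ℓ).sum) * n ^ 10 := by
            rw [Finset.sum_mul]
        _ ≤ M * W * n ^ 10 := Nat.mul_le_mul_right _ (hload i ℓ)
    set C := ∑ b ∈ Finset.univ.filter (· ≤ i), Multiset.card (S b ℓ) with hC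
    by_contra hcon
    push_neg at hcon
    have hC1 : M + 1 ≤ C := hcon
    have h3 : (M + 1) * (W * (n ^ 10 - 1)) ≤ M * W * n ^ 10 :=
      le_trans (Nat.mul_le_mul_right _ hC1) hsum
    obtain ⟨D, hD⟩ : ∃ D, n ^ 10 = D + 1 := ⟨n ^ 10 - 1, by omega⟩
    rw [hD] at h3
    simp only [Nat.add_sub_cancel] at h3
    -- (M+1)*(W*D) ≤ M*W*(D+1)
    nlinarith [hWpos, hMn, hP2, hD]
  refine ⟨part1, ?_⟩
  intro hfull
  -- partial sums equal exactly
  have hfilcard : ∀ i : Fin q, (Finset.univ.filter (· ≤ i)).card = (i : ℕ) + 1 := by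
    intro i
    have : Finset.univ.filter (· ≤ i) = Finset.Iic i := by
      ext b; simp
    rw [this, Fin.card_Iic]
  have hPeq : ∀ (i : Fin q) (ℓ : Fin k),
      ∑ b ∈ Finset.univ.filter (· ≤ i), Multiset.card (S b ℓ) = ((i : ℕ) + 1) * s := by
    intro i ℓ
    have htot : ∑ ℓ' : Fin k, ∑ b ∈ Finset.univ.filter (· ≤ i), Multiset.card (S b ℓ') =
        ∑ ℓ' : Fin k, ((i : ℕ) + 1) * s := by
      rw [Finset.sum_comm]
      rw [Finset.sum_congr rfl (fun b _ => hfull b), Finset.sum_const, hfilcard]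
      simp [Finset.card_univ, mul_comm, mul_assoc, mul_left_comm]
    exact (Finset.sum_eq_sum_iff_of_le (fun ℓ' _ => part1 i ℓ')).mp htot ℓ (Finset.mem_univ ℓ)
  intro i ℓ
  rcases Nat.eq_zero_or_pos (i : ℕ) with h0 | hpos
  · have hset : Finset.univ.filter (· ≤ i) = {i} := by
      ext b
      simp only [Finset.mem_filter, Finset.mem_univ, true_and, Finset.mem_singleton,
        Fin.le_def, Fin.ext_iff]
      omega
    have := hPeq i ℓ
    rw [hset, Finset.sum_singleton, h0] at this
    simpa using this
  · set j : Fin q := ⟨(i : ℕ) - 1, by omega⟩ with hjdef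
    have hj : (j : ℕ) = (i : ℕ) - 1 := rfl
    have hset : Finset.univ.filter (· ≤ i) = insert i (Finset.univ.filter (· ≤ j)) := by
      ext b
      simp only [Finset.mem_filter, Finset.mem_univ, true_and, Finset.mem_insert,
        Fin.le_def, Fin.ext_iff, hj]
      omega
    have hnotmem : i ∉ Finset.univ.filter (· ≤ j) := by
      simp only [Finset.mem_filter, Finset.mem_univ, true_and, Fin.le_def, hj]
      omega
    have h1 := hPeq i ℓ
    rw [hset, Finset.sum_insert hnotmem, hPeq j ℓ] at h1
    have h2 : ((i : ℕ) + 1) * s = ((j : ℕ) + 1) * s + s := by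
      have : (i : ℕ) = (j : ℕ) + 1 := by omega
      rw [this]; ring
    rw [h2] at h1
    linarith
end

section
/- Let k ≥ 2, let jobs have processing times p₁, …, p_n ∈ ℕ and speeds s₁, …, s_k ∈ (0,1], let M ≥ 0 be a real makespan target, set M' = 3·max_i ⌊s_i·M⌋, and add k dummy jobs p'_i = M' − ⌊s_i·M⌋ for i ∈ [k]. Then there is an assignment π : [n] → [k] with Σ_{j : π(j)=i} p_j ≤ ⌊s_i·M⌋ for every i ∈ [k], if and only if the n + k jobs {p_j} ∪ {p'_i} can be partitioned among k identical machines so that each machine's total processing time is at most M'. -/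
/-!
Let `S` bound all machine bounds `b i`. Every dummy job has size `3S - b i ≥ 2S`, so when `S > 0`
two dummies on one identical machine already exceed the capacity `3S`. Hence the dummies sit on
distinct machines, i.e. they induce a relabelling of the machines, and on the machine carrying
dummy `i` the remaining load is at most `3S - (3S - b i) = b i`. When `S ≤ 0` the capacity `3S`
leaves no room for any positive load, so the original jobs keep their machines and meet
the bounds `b i ≥ 0`.
-/

open Finset

namespace Scheduling

variable {ι κ J : Type*} [Fintype J] [DecidableEq ι] [DecidableEq κ]

def load (w : J → ℤ) (π : J → ι) (i : ι) : ℤ :=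
  ∑ j ∈ univ.filter (fun j => π j = i), w j

variable (w : J → ℤ)

lemma load_nonneg (hw : ∀ j, 0 ≤ w j) (π : J → ι) (i : ι) : 0 ≤ load w π i :=
  sum_nonneg fun j _ => hw j

lemma add_le_load (hw : ∀ j, 0 ≤ w j) {π : J → ι} {j₁ j₂ : J} (hne : j₁ ≠ j₂)
    (h : π j₁ = π j₂) : w j₁ + w j₂ ≤ load w π (π j₁) := by
  classical
  rw [← sum_pair hne]
  refine sum_le_sum_of_subset_of_nonneg (fun j hj => ?_) fun j _ _ => hw j
  rcases mem_insert.mp hj with rfl | hj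
  · simp
  · simp [mem_singleton.mp hj, h]

lemma load_equiv (e : J ≃ ι) (i : ι) : load w e i = w (e.symm i) := by
  classical
  unfold load
  convert sum_singleton w (e.symm i)
  ext j
  simp [← e.eq_symm_apply]

lemma load_symm_comp (e : ι ≃ κ) (π : J → κ) (i : ι) :
    load w (e.symm ∘ π) i = load w π (e i) := by
  simp only [load, Function.comp_apply, e.symm_apply_eq]

lemma injective_dummy_machine [Fintype ι] {p : J → ℤ} {b : ι → ℤ} {S : ℤ} (hp : ∀ j, 0 ≤ p j)
    (hbS : ∀ i, b i ≤ S) (hS : 0 < S) {m : J ⊕ ι → ι}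
    (hm : ∀ i, load p (m ∘ Sum.inl) i + load (fun d => 3 * S - b d) (m ∘ Sum.inr) i ≤ 3 * S) :
    Function.Injective (m ∘ Sum.inr) := by
  intro d₁ d₂ h
  by_contra hne
  have hpair := add_le_load (fun d => 3 * S - b d) (fun d => by linarith [hbS d]) hne h
  linarith [hm ((m ∘ Sum.inr) d₁), load_nonneg p hp (m ∘ Sum.inl) ((m ∘ Sum.inr) d₁),
    hbS d₁, hbS d₂]

theorem exists_load_le_iff_exists_load_add_dummy_le [Fintype ι] (p : J → ℤ) (b : ι → ℤ)
    (S : ℤ) (hp : ∀ j, 0 ≤ p j) (hb0 : ∀ i, 0 ≤ b i) (hbS : ∀ i, b i ≤ S) :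
    (∃ π : J → ι, ∀ i, load p π i ≤ b i) ↔
      ∃ m : J ⊕ ι → ι, ∀ i,
        load p (m ∘ Sum.inl) i + load (fun d => 3 * S - b d) (m ∘ Sum.inr) i ≤ 3 * S := by
  constructor
  · rintro ⟨π, hπ⟩
    refine ⟨Sum.elim π id, fun i => ?_⟩
    have hdummy : load (fun d => 3 * S - b d) id i = 3 * S - b i :=
      load_equiv _ (Equiv.refl ι) i
    show load p π i + load _ id i ≤ 3 * S
    linarith [hπ i]
  · rintro ⟨m, hm⟩
    rcases le_or_gt S 0 with hS | hS
    · refine ⟨m ∘ Sum.inl, fun i => ?_⟩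
      have := load_nonneg (fun d => 3 * S - b d) (fun d => by linarith [hb0 d, hbS d])
        (m ∘ Sum.inr) i
      linarith [hm i, hb0 i]
    · let e : ι ≃ ι := .ofBijective _ (Finite.injective_iff_bijective.mp
        (injective_dummy_machine hp hbS hS hm))
      refine ⟨e.symm ∘ m ∘ Sum.inl, fun i => ?_⟩
      have hdummy : load (fun d => 3 * S - b d) (m ∘ Sum.inr) (e i) = 3 * S - b i :=
        (load_equiv _ e (e i)).trans (by rw [e.symm_apply_apply])
      rw [load_symm_comp]
      linarith [hm (e i)]

end Scheduling

open Scheduling in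
theorem stmt_19_general (k n : ℕ) (p : Fin n → ℕ) (s : Fin k → ℝ)
    (hs : ∀ i, 0 < s i ∧ s i ≤ 1) (M : ℝ) (hM : 0 ≤ M) :
    (∃ π : Fin n → Fin k, ∀ i : Fin k,
      (∑ j ∈ Finset.univ.filter (fun j => π j = i), (p j : ℤ)) ≤ ⌊s i * M⌋) ↔
    (∃ m : Fin n ⊕ Fin k → Fin k, ∀ i : Fin k,
      (∑ j ∈ Finset.univ.filter (fun j => m (Sum.inl j) = i), (p j : ℤ)) +
      (∑ d ∈ Finset.univ.filter (fun d => m (Sum.inr d) = i),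
        (3 * ((Finset.univ.sup fun i' => (⌊s i' * M⌋).toNat : ℕ) : ℤ) - ⌊s d * M⌋)) ≤
      3 * ((Finset.univ.sup fun i' => (⌊s i' * M⌋).toNat : ℕ) : ℤ)) :=
  exists_load_le_iff_exists_load_add_dummy_le (fun j => (p j : ℤ)) (fun i => ⌊s i * M⌋) _
    (fun j => Int.natCast_nonneg _)
    (fun i => Int.floor_nonneg.mpr (mul_nonneg (hs i).1.le hM))
    (fun i => (Int.self_le_toNat _).trans <| by
      exact_mod_cast le_sup (f := fun i' => (⌊s i' * M⌋).toNat) (mem_univ i))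

/-- Reduction from `Q_k ‖ C_max` to `P_k ‖ C_max`: with `M' = 3·maxᵢ ⌊sᵢ·M⌋`
and dummy jobs `p'ᵢ = M' − ⌊sᵢ·M⌋`, there is an assignment of the `n` jobs to
the `k` uniform machines with load at most `⌊sᵢ·M⌋` on machine `i`, iff the
`n + k` jobs (originals plus dummies) can be distributed over `k` identical
machines with load at most `M'` each. -/
theorem stmt_19 (k n : ℕ) (hk : 2 ≤ k) (p : Fin n → ℕ) (s : Fin k → ℝ)
    (hs : ∀ i, 0 < s i ∧ s i ≤ 1) (M : ℝ) (hM : 0 ≤ M) :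
    (∃ π : Fin n → Fin k, ∀ i : Fin k,
      (∑ j ∈ Finset.univ.filter (fun j => π j = i), (p j : ℤ)) ≤ ⌊s i * M⌋) ↔
    (∃ m : Fin n ⊕ Fin k → Fin k, ∀ i : Fin k,
      (∑ j ∈ Finset.univ.filter (fun j => m (Sum.inl j) = i), (p j : ℤ)) +
      (∑ d ∈ Finset.univ.filter (fun d => m (Sum.inr d) = i),
        (3 * ((Finset.univ.sup fun i' => (⌊s i' * M⌋).toNat : ℕ) : ℤ) - ⌊s d * M⌋)) ≤
      3 * ((Finset.univ.sup fun i' => (⌊s i' * M⌋).toNat : ℕ) : ℤ)) :=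
  stmt_19_general k n p s hs M hM
end
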